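/- Let δ > 0, σ > 0, and define G(x) = ∫₀ˣ ds/(1 + δ s^σ) for x ≥ 0. If U is a solution of the G-AL lattice on [0,T_f], then the quantity P_δ(U(t)) = ∑_{n∈ℤ} G(|U_n(t)|²) is conserved: P_δ(U(t)) = P_δ(U(0)) for all t ∈ [0,T_f]. (For δ = 1 this quantity equals ∑_{n∈ℤ} |U_n|² · ₂F₁(1, 1/σ, 1 + 1/σ; −|U_n|²), the conserved quantity of the G-AL system expressed through the Gauss hypergeometric function.) -/

import Mathlib

/-!
Each site obeys the local conservation law `d/dt G(|U_n|²) = J_n - J_{n-1}` for the bond current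
`J_n = 2 Im(conj U_n U_{n+1})`: the weight `G'(x) = 1/(1 + δ x^σ)` cancels exactly the nonlinear
factor `1 + δ|U_n|^{2σ}` of the hopping term. Integrating in time and summing over `n` (legitimate
since `∑ |J_n| ≤ 2‖U‖²` stays bounded on the compact time interval), the currents telescope to zero.
-/

noncomputable section

open Set

/-- The sequence space ℓ²(ℤ,ℂ). -/
abbrev Seq2 := lp (fun _ : ℤ => ℂ) 2


/-- `U` is a solution of the generalised Ablowitz–Ladik (G-AL) lattice on `[0,Tf]`:
a continuously differentiable curve into ℓ²(ℤ,ℂ) satisfying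
`i dU_n/dt = (U_{n+1} − 2U_n + U_{n−1}) + δ|U_n|^{2σ}(U_{n+1} + U_{n−1})` componentwise. -/
def IsGALSolution (δ σ Tf : ℝ) (U : ℝ → Seq2) : Prop :=
  ∃ Udot : ℝ → Seq2, ContinuousOn Udot (Icc 0 Tf) ∧
    ∀ t ∈ Icc (0:ℝ) Tf,
      HasDerivWithinAt U (Udot t) (Icc 0 Tf) t ∧
      ∀ n : ℤ, Complex.I * Udot t n =
        (U t (n+1) - 2 * U t n + U t (n-1))
          + (δ : ℂ) * ((‖U t n‖) ^ (2*σ) : ℝ) * (U t (n+1) + U t (n-1))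


/-- `G(x) = ∫₀ˣ ds/(1 + δ s^σ)`. -/
def Gfun (δ σ : ℝ) (x : ℝ) : ℝ := ∫ s in (0:ℝ)..x, 1 / (1 + δ * s ^ σ)

open MeasureTheory ComplexConjugate

section Gfun

variable {δ σ : ℝ}

lemma one_add_mul_rpow_pos (hδ : 0 ≤ δ) {s : ℝ} (hs : 0 ≤ s) : 0 < 1 + δ * s ^ σ := by
  have := Real.rpow_nonneg hs σ
  positivity

lemma continuousAt_Gfun_integrand (hδ : 0 ≤ δ) (hσ : 0 ≤ σ) {s : ℝ} (hs : 0 ≤ s) :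
    ContinuousAt (fun r : ℝ => 1 / (1 + δ * r ^ σ)) s :=
  continuousAt_const.div (continuousAt_const.add (continuousAt_const.mul
    (Real.continuousAt_rpow_const s σ (Or.inr hσ)))) (one_add_mul_rpow_pos hδ hs).ne'

lemma intervalIntegrable_Gfun_integrand (hδ : 0 ≤ δ) (hσ : 0 ≤ σ) {x : ℝ} (hx : 0 ≤ x) :
    IntervalIntegrable (fun s : ℝ => 1 / (1 + δ * s ^ σ)) volume 0 x :=
  ContinuousOn.intervalIntegrable fun s hs => by
    rw [uIcc_of_le hx] at hs
    exact (continuousAt_Gfun_integrand hδ hσ hs.1).continuousWithinAt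

lemma hasDerivAt_Gfun (hδ : 0 ≤ δ) (hσ : 0 ≤ σ) {x : ℝ} (hx : 0 ≤ x) :
    HasDerivAt (Gfun δ σ) (1 / (1 + δ * x ^ σ)) x := by
  have hmeas : Measurable fun s : ℝ => 1 / (1 + δ * s ^ σ) := by fun_prop
  exact intervalIntegral.integral_hasDerivAt_right (intervalIntegrable_Gfun_integrand hδ hσ hx)
    hmeas.stronglyMeasurable.stronglyMeasurableAtFilter (continuousAt_Gfun_integrand hδ hσ hx)

lemma Gfun_nonneg (hδ : 0 ≤ δ) {x : ℝ} (hx : 0 ≤ x) : 0 ≤ Gfun δ σ x :=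
  intervalIntegral.integral_nonneg hx fun _ hs =>
    (one_div_pos.2 (one_add_mul_rpow_pos hδ hs.1)).le

lemma Gfun_le_self (hδ : 0 ≤ δ) (hσ : 0 ≤ σ) {x : ℝ} (hx : 0 ≤ x) : Gfun δ σ x ≤ x := by
  have h := intervalIntegral.integral_mono_on hx (intervalIntegrable_Gfun_integrand hδ hσ hx)
    intervalIntegrable_const fun s hs => (div_le_one (one_add_mul_rpow_pos hδ hs.1)).2 <|
      le_add_of_nonneg_right (mul_nonneg hδ (Real.rpow_nonneg hs.1 σ))
  simpa [Gfun] using h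

end Gfun

namespace lp

variable {ι : Type*} {E : ι → Type*} [∀ i, NormedAddCommGroup (E i)]

lemma summable_norm_sq (f : lp E 2) : Summable fun i => ‖f i‖ ^ 2 := by
  simpa using (lp.memℓp f).summable (by norm_num)

lemma tsum_norm_sq (f : lp E 2) : ∑' i, ‖f i‖ ^ 2 = ‖f‖ ^ 2 := by
  simpa using (lp.norm_rpow_eq_tsum (p := 2) (by norm_num) f).symm

end lp

lemma summable_Gfun_norm_sq {δ σ : ℝ} (hδ : 0 ≤ δ) (hσ : 0 ≤ σ) (u : Seq2) :
    Summable fun n => Gfun δ σ (‖u n‖ ^ 2) :=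
  (lp.summable_norm_sq u).of_nonneg_of_le (fun _ => Gfun_nonneg hδ (sq_nonneg _))
    fun _ => Gfun_le_self hδ hσ (sq_nonneg _)

section Shift

variable {E : Type*}

lemma tsum_sub_comp_sub_one [AddCommGroup E] [TopologicalSpace E] [IsTopologicalAddGroup E]
    [T2Space E] {a : ℤ → E} (ha : Summable a) : ∑' n, (a n - a (n - 1)) = 0 := by
  have hshift : ∑' n, a (n - 1) = ∑' n, a n := (Equiv.subRight (1 : ℤ)).tsum_eq a
  have ha' : Summable fun n => a (n - 1) := (Equiv.subRight (1 : ℤ)).summable_iff.2 ha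
  rw [ha.tsum_sub ha', hshift, sub_self]

variable [SeminormedAddCommGroup E] {a : ℤ → E}

lemma summable_norm_sub_comp_sub_one (ha : Summable fun n => ‖a n‖) :
    Summable fun n => ‖a n - a (n - 1)‖ :=
  (ha.add ((Equiv.subRight (1 : ℤ)).summable_iff.2 ha)).of_nonneg_of_le (fun _ => norm_nonneg _)
    fun _ => norm_sub_le _ _

lemma tsum_norm_sub_comp_sub_one_le (ha : Summable fun n => ‖a n‖) :
    ∑' n, ‖a n - a (n - 1)‖ ≤ 2 * ∑' n, ‖a n‖ := by
  have ha' : Summable fun n => ‖a (n - 1)‖ := (Equiv.subRight (1 : ℤ)).summable_iff.2 ha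
  calc ∑' n, ‖a n - a (n - 1)‖ ≤ ∑' n, (‖a n‖ + ‖a (n - 1)‖) :=
        (summable_norm_sub_comp_sub_one ha).tsum_le_tsum (fun _ => norm_sub_le _ _) (ha.add ha')
    _ = 2 * ∑' n, ‖a n‖ := by
        have hshift : ∑' n, ‖a (n - 1)‖ = ∑' n, ‖a n‖ :=
          (Equiv.subRight (1 : ℤ)).tsum_eq fun n => ‖a n‖
        rw [ha.tsum_add ha', hshift, two_mul]

end Shift

lemma tsum_sub_tsum_eq_integral_tsum {ι : Type*} [Countable ι] {g h : ι → ℝ → ℝ} {a b C : ℝ}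
    (hab : a ≤ b) (hg : ∀ n, ∀ s ∈ Icc a b, HasDerivWithinAt (g n) (h n s) (Icc a b) s)
    (hh : ∀ n, ContinuousOn (h n) (Icc a b)) (hsum : ∀ s ∈ Icc a b, Summable fun n => ‖h n s‖)
    (hbound : ∀ s ∈ Icc a b, ∑' n, ‖h n s‖ ≤ C)
    (hga : Summable fun n => g n a) (hgb : Summable fun n => g n b) :
    ∑' n, g n b - ∑' n, g n a = ∫ s in a..b, ∑' n, h n s := by
  have hftc : ∀ n, ∫ s in a..b, h n s = g n b - g n a := fun n =>
    intervalIntegral.integral_eq_sub_of_hasDerivAt_of_le hab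
      (fun s hs => (hg n s hs).continuousWithinAt)
      (fun s hs => (hg n s (Ioo_subset_Icc_self hs)).hasDerivAt (Icc_mem_nhds hs.1 hs.2))
      ((hh n).intervalIntegrable_of_Icc hab)
  have hmeas : ∀ n, AEStronglyMeasurable (h n) (volume.restrict (Ioc a b)) := fun n =>
    ((hh n).mono Ioc_subset_Icc_self).aestronglyMeasurable measurableSet_Ioc
  have hfinite : ∑' n, ∫⁻ s in Ioc a b, ‖h n s‖ₑ ≠ ⊤ := by
    rw [← lintegral_tsum fun n => (hmeas n).enorm]
    refine ne_top_of_le_ne_top (b := ENNReal.ofReal C * volume (Ioc a b))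
      (ENNReal.mul_ne_top ENNReal.ofReal_ne_top measure_Ioc_lt_top.ne) ?_
    rw [← setLIntegral_const]
    refine setLIntegral_mono' measurableSet_Ioc fun s hs => ?_
    have hs' : s ∈ Icc a b := Ioc_subset_Icc_self hs
    calc ∑' n, ‖h n s‖ₑ = ENNReal.ofReal (∑' n, ‖h n s‖) := by
          rw [ENNReal.ofReal_tsum_of_nonneg (fun _ => norm_nonneg _) (hsum s hs')]
          simp only [ofReal_norm]
      _ ≤ ENNReal.ofReal C := ENNReal.ofReal_le_ofReal (hbound s hs')
  rw [← hgb.tsum_sub hga, intervalIntegral.integral_of_le hab, integral_tsum hmeas hfinite]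
  exact tsum_congr fun n => by rw [← intervalIntegral.integral_of_le hab, hftc]

def bondCurrent (u : ℤ → ℂ) (n : ℤ) : ℝ := 2 * (conj (u n) * u (n + 1)).im

lemma bondCurrent_sub_bondCurrent_sub_one (u : ℤ → ℂ) (n : ℤ) :
    bondCurrent u n - bondCurrent u (n - 1) = 2 * (conj (u n) * (u (n + 1) + u (n - 1))).im := by
  simp only [bondCurrent, sub_add_cancel, mul_add, Complex.add_im, Complex.mul_im,
    Complex.conj_re, Complex.conj_im]
  ring

lemma norm_bondCurrent_le (u : ℤ → ℂ) (n : ℤ) :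
    ‖bondCurrent u n‖ ≤ ‖u n‖ ^ 2 + ‖u (n + 1)‖ ^ 2 := by
  have him : |(conj (u n) * u (n + 1)).im| ≤ ‖u n‖ * ‖u (n + 1)‖ := by
    simpa using Complex.abs_im_le_norm (conj (u n) * u (n + 1))
  rw [bondCurrent, Real.norm_eq_abs, abs_mul, abs_two]
  nlinarith [sq_nonneg (‖u n‖ - ‖u (n + 1)‖)]

lemma continuous_bondCurrent {p : ENNReal} [Fact (1 ≤ p)] (n : ℤ) :
    Continuous fun u : lp (fun _ : ℤ => ℂ) p => bondCurrent u n := by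
  have hcoord : ∀ m : ℤ, Continuous fun u : lp (fun _ : ℤ => ℂ) p => u m := fun m =>
    (lp.lipschitzWith_one_eval p m).continuous
  exact continuous_const.mul (Complex.continuous_im.comp
    ((Complex.continuous_conj.comp (hcoord n)).mul (hcoord (n + 1))))

lemma summable_norm_bondCurrent (u : Seq2) : Summable fun n => ‖bondCurrent u n‖ :=
  ((lp.summable_norm_sq u).add ((Equiv.addRight (1 : ℤ)).summable_iff.2 (lp.summable_norm_sq u))
    ).of_nonneg_of_le (fun _ => norm_nonneg _) (norm_bondCurrent_le u)

lemma tsum_norm_bondCurrent_le (u : Seq2) : ∑' n, ‖bondCurrent u n‖ ≤ 2 * ‖u‖ ^ 2 := by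
  have hs := lp.summable_norm_sq u
  have hs' : Summable fun n => ‖u (n + 1)‖ ^ 2 := (Equiv.addRight (1 : ℤ)).summable_iff.2 hs
  calc ∑' n, ‖bondCurrent u n‖ ≤ ∑' n, (‖u n‖ ^ 2 + ‖u (n + 1)‖ ^ 2) :=
        (summable_norm_bondCurrent u).tsum_le_tsum (norm_bondCurrent_le u) (hs.add hs')
    _ = 2 * ‖u‖ ^ 2 := by
        have hshift : ∑' n, ‖u (n + 1)‖ ^ 2 = ∑' n, ‖u n‖ ^ 2 :=
          (Equiv.addRight (1 : ℤ)).tsum_eq fun n => ‖u n‖ ^ 2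
        rw [hs.tsum_add hs', hshift, lp.tsum_norm_sq, two_mul]

/-- `Re(conj u u') = Im(conj u (i u'))`, and the diagonal term `-2|u|²` of the Laplacian is real. -/
lemma Complex.inner_eq_of_I_mul_eq {u u' v w : ℂ} {c : ℝ}
    (h : Complex.I * u' = (v - 2 * u + w) + c * (v + w)) :
    inner ℝ u u' = (1 + c) * (conj u * (v + w)).im := by
  have hu' : u' = -Complex.I * ((v - 2 * u + w) + c * (v + w)) := by
    rw [← h, ← mul_assoc, neg_mul, Complex.I_mul_I, neg_neg, one_mul]
  rw [Complex.inner, hu']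
  simp only [Complex.mul_re, Complex.mul_im, Complex.neg_re, Complex.neg_im, Complex.I_re,
    Complex.I_im, Complex.add_re, Complex.add_im, Complex.sub_re, Complex.sub_im,
    Complex.ofReal_re, Complex.ofReal_im, Complex.conj_re, Complex.conj_im, Complex.re_ofNat,
    Complex.im_ofNat]
  ring

namespace IsGALSolution

variable {δ σ Tf : ℝ} {U : ℝ → Seq2}

lemma continuousOn (hU : IsGALSolution δ σ Tf U) : ContinuousOn U (Icc 0 Tf) := by
  obtain ⟨_, _, hODE⟩ := hU
  exact fun s hs => (hODE s hs).1.continuousWithinAt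

lemma hasDerivWithinAt_Gfun_norm_sq (hU : IsGALSolution δ σ Tf U) (hδ : 0 ≤ δ) (hσ : 0 ≤ σ)
    (n : ℤ) {s : ℝ} (hs : s ∈ Icc 0 Tf) :
    HasDerivWithinAt (fun r => Gfun δ σ (‖U r n‖ ^ 2))
      (bondCurrent (U s) n - bondCurrent (U s) (n - 1)) (Icc 0 Tf) s := by
  obtain ⟨Udot, _, hODE⟩ := hU
  obtain ⟨hderiv, hlattice⟩ := hODE s hs
  have hcoord : HasDerivWithinAt (fun r => U r n) (Udot s n) (Icc 0 Tf) s :=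
    (lp.evalCLM ℂ _ 2 n).restrictScalars ℝ |>.hasFDerivAt.comp_hasDerivWithinAt s hderiv
  have hG := (hasDerivAt_Gfun hδ hσ (sq_nonneg ‖U s n‖)).comp_hasDerivWithinAt s hcoord.norm_sq
  have hrpow : (‖U s n‖ ^ 2) ^ σ = ‖U s n‖ ^ (2 * σ) := by
    rw [← Real.rpow_natCast, ← Real.rpow_mul (norm_nonneg _), Nat.cast_ofNat]
  have hpos : 0 < 1 + δ * ‖U s n‖ ^ (2 * σ) :=
    one_add_mul_rpow_pos hδ (norm_nonneg _)
  refine hG.congr_deriv ?_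
  rw [hrpow, Complex.inner_eq_of_I_mul_eq (by exact_mod_cast hlattice n),
    bondCurrent_sub_bondCurrent_sub_one]
  field_simp

end IsGALSolution

/-- Conservation of the quantity `P_δ(U(t)) = ∑_{n∈ℤ} G(|U_n(t)|²)`,
where `G(x) = ∫₀ˣ ds/(1 + δ s^σ)`, along solutions of the G-AL lattice.
(For δ = 1 this is the conserved quantity expressed via the Gauss
hypergeometric function ₂F₁(1, 1/σ, 1 + 1/σ; −|U_n|²).) -/
theorem gal_deformed_quantity_conserved (δ σ Tf : ℝ) (hδ : 0 < δ) (hσ : 0 < σ)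
    (U : ℝ → Seq2) (hU : IsGALSolution δ σ Tf U) :
    ∀ t ∈ Icc (0:ℝ) Tf,
      (∑' n : ℤ, Gfun δ σ ((‖U t n‖)^2))
        = ∑' n : ℤ, Gfun δ σ ((‖U 0 n‖)^2) := by
  rintro t ⟨ht0, htT⟩
  have hsub : Icc 0 t ⊆ Icc 0 Tf := Icc_subset_Icc_right htT
  obtain ⟨C, hC⟩ := isCompact_Icc.exists_bound_of_continuousOn hU.continuousOn
  have hbalance := tsum_sub_tsum_eq_integral_tsum (C := 4 * C ^ 2) ht0
    (fun n s hs => (hU.hasDerivWithinAt_Gfun_norm_sq hδ.le hσ.le n (hsub hs)).mono hsub)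
    (fun n => (((continuous_bondCurrent n).sub (continuous_bondCurrent (n - 1))
      ).comp_continuousOn hU.continuousOn).mono hsub)
    (fun s _ => summable_norm_sub_comp_sub_one (summable_norm_bondCurrent (U s)))
    (fun s hs => by
      have hUs : ‖U s‖ ^ 2 ≤ C ^ 2 := pow_le_pow_left₀ (norm_nonneg _) (hC s (hsub hs)) 2
      linarith [tsum_norm_sub_comp_sub_one_le (summable_norm_bondCurrent (U s)),
        tsum_norm_bondCurrent_le (U s)])
    (summable_Gfun_norm_sq hδ.le hσ.le (U 0)) (summable_Gfun_norm_sq hδ.le hσ.le (U t))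
  simp only [tsum_sub_comp_sub_one (summable_norm_bondCurrent _).of_norm,
    intervalIntegral.integral_zero] at hbalance
  linarith
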